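/- (Theorem 3.1: conformal image of an osculating curve.) Let σ(s) = Φ(u(s),v(s)) be osculating, i.e. σ = ξσ' + (μ/κ)σ'' for smooth ξ, μ. Let δ : ℝ² → ℝ be smooth and positive, let A : ℝ² → L(ℝ³,ℝ³) be a smooth family of linear maps (the differential of a conformal map along Φ), and let Φ̃ : ℝ² → ℝ³ be smooth with Φ̃_u = δ·A(Φ_u) and Φ̃_v = δ·A(Φ_v) pointwise. Define σ̃ : ℝ → ℝ³ by σ̃(s) = δ·A(σ(s)) + (μ/κ)[u'²(δ_u A(Φ_u) + δ(∂_u A)(Φ_u)) + 2u'v'(δ_u A(Φ_v) + δ(∂_u A)(Φ_v)) + v'²(δ_v A(Φ_v) + δ(∂_v A)(Φ_v))], all quantities on ℝ² evaluated at (u(s),v(s)). Then σ̃(s) = ξ(Φ̃_u u' + Φ̃_v v') + (μ/κ)(Φ̃_u u'' + Φ̃_v v'' + Φ̃_uu u'² + 2Φ̃_uv u'v' + Φ̃_vv v'²); in particular σ̃(s) lies in the plane spanned by the tangent vector Φ̃_u u' + Φ̃_v v' of the image curve and the vector Φ̃_u u'' + Φ̃_v v'' + Φ̃_uu u'² + 2Φ̃_uv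 u'v' + Φ̃_vv v'², so σ̃ is an osculating curve on the patch Φ̃. -/

import Mathlib

noncomputable section
open Matrix

/-- Partial derivative in the first (`u`) direction. -/
def pu {E : Type*} [NormedAddCommGroup E] [NormedSpace ℝ E] (f : ℝ × ℝ → E) (p : ℝ × ℝ) : E :=
  fderiv ℝ f p (1, 0)

/-- Partial derivative in the second (`v`) direction. -/
def pv {E : Type*} [NormedAddCommGroup E] [NormedSpace ℝ E] (f : ℝ × ℝ → E) (p : ℝ × ℝ) : E :=
  fderiv ℝ f p (0, 1)

/-- Euclidean norm on `Fin 3 → ℝ`. -/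
def enorm3 (x : Fin 3 → ℝ) : ℝ := Real.sqrt (x ⬝ᵥ x)

section helpers
variable {F : Type*} [NormedAddCommGroup F] [NormedSpace ℝ F]

lemma contDiff_pu {f : ℝ × ℝ → F} (hf : ContDiff ℝ (⊤ : ℕ∞) f) : ContDiff ℝ (⊤ : ℕ∞) (pu f) :=
  (hf.fderiv_right (by simp)).clm_apply contDiff_const

lemma contDiff_pv {f : ℝ × ℝ → F} (hf : ContDiff ℝ (⊤ : ℕ∞) f) : ContDiff ℝ (⊤ : ℕ∞) (pv f) :=
  (hf.fderiv_right (by simp)).clm_apply contDiff_const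

/-- chain rule for a curve on a patch -/
lemma hasDerivAt_comp_patch {f : ℝ × ℝ → F} (hf : ContDiff ℝ (⊤ : ℕ∞) f)
    {u v : ℝ → ℝ} (hu : ContDiff ℝ (⊤ : ℕ∞) u) (hv : ContDiff ℝ (⊤ : ℕ∞) v) (s : ℝ) :
    HasDerivAt (fun t => f (u t, v t))
      (deriv u s • pu f (u s, v s) + deriv v s • pv f (u s, v s)) s := by
  have hP : HasDerivAt (fun t => (u t, v t)) (deriv u s, deriv v s) s :=
    ((hu.differentiable (by simp) s).hasDerivAt).prodMk ((hv.differentiable (by simp) s).hasDerivAt)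
  have hf' : HasFDerivAt f (fderiv ℝ f (u s, v s)) (u s, v s) :=
    (hf.differentiable (by simp) (u s, v s)).hasFDerivAt
  have h := hf'.comp_hasDerivAt s hP
  convert h using 1
  · rfl
  have he : (deriv u s, deriv v s) =
      deriv u s • ((1:ℝ),(0:ℝ)) + deriv v s • ((0:ℝ),(1:ℝ)) := by simp [Prod.ext_iff]
  rw [pu, pv, he, map_add]
  rw [(fderiv ℝ f (u s, v s)).map_smul, (fderiv ℝ f (u s, v s)).map_smul]

/-- mixed partials commute -/
lemma pvpu_eq_pupv {f : ℝ × ℝ → F} (hf : ContDiff ℝ (⊤ : ℕ∞) f) (p : ℝ × ℝ) :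
    pv (pu f) p = pu (pv f) p := by
  have hdf : ContDiff ℝ (⊤ : ℕ∞) (fderiv ℝ f) := hf.fderiv_right (by simp)
  have hsym : IsSymmSndFDerivAt ℝ f p :=
    hf.contDiffAt.isSymmSndFDerivAt (by norm_num; exact WithTop.coe_le_coe.mpr (le_top : (2:ℕ∞) ≤ ⊤))
  have key : ∀ w z : ℝ × ℝ, fderiv ℝ (fun q => fderiv ℝ f q w) p z
      = fderiv ℝ (fderiv ℝ f) p z w := by
    intro w z
    have h1 : HasFDerivAt (fun q => fderiv ℝ f q w)
        (((fderiv ℝ (fderiv ℝ f) p).flip) w) p := by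
      have := ((hdf.differentiable (by simp) p).hasFDerivAt).clm_apply
        (hasFDerivAt_const w p)
      simpa using this
    rw [h1.fderiv]; rfl
  have e1 : pu f = fun q => fderiv ℝ f q (1, 0) := rfl
  have e2 : pv f = fun q => fderiv ℝ f q (0, 1) := rfl
  rw [pu, pv, e1, e2, key, key, hsym.eq]

/-- product rule for `δ • A(g)` -/
lemma pd_smul_clm {δ : ℝ × ℝ → ℝ} (hδ : ContDiff ℝ (⊤ : ℕ∞) δ)
    {A : ℝ × ℝ → (F →L[ℝ] F)} (hA : ContDiff ℝ (⊤ : ℕ∞) A)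
    {g : ℝ × ℝ → F} (hg : ContDiff ℝ (⊤ : ℕ∞) g) (q w : ℝ × ℝ) :
    fderiv ℝ (fun p => δ p • A p (g p)) q w =
      (fderiv ℝ δ q w) • A q (g q) + δ q • (fderiv ℝ A q w) (g q)
        + δ q • A q (fderiv ℝ g q w) := by
  have h1 : HasFDerivAt (fun p => A p (g p))
      ((A q).comp (fderiv ℝ g q) + (fderiv ℝ A q).flip (g q)) q :=
    ((hA.differentiable (by simp) q).hasFDerivAt).clm_apply
      ((hg.differentiable (by simp) q).hasFDerivAt)
  have h2 : HasFDerivAt (fun p => δ p • A p (g p)) _ q := ((hδ.differentiable (by simp) q).hasFDerivAt).smul h1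
  rw [h2.fderiv]
  simp [ContinuousLinearMap.add_apply, smul_add]
  abel
end helpers

theorem conformal_image_of_osculating_curve
    (Φ : ℝ × ℝ → Fin 3 → ℝ) (hΦ : ContDiff ℝ (⊤ : ℕ∞) Φ)
    (hreg : ∀ p, crossProduct (pu Φ p) (pv Φ p) ≠ 0)
    (u v : ℝ → ℝ) (hu : ContDiff ℝ (⊤ : ℕ∞) u) (hv : ContDiff ℝ (⊤ : ℕ∞) v)
    (σ : ℝ → Fin 3 → ℝ) (hσ : ∀ s, σ s = Φ (u s, v s))
    (hunit : ∀ s, enorm3 (deriv σ s) = 1)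
    (κ : ℝ → ℝ) (hκ : ∀ s, κ s = enorm3 (deriv (deriv σ) s)) (hκ0 : ∀ s, κ s ≠ 0)
    (ξ μ : ℝ → ℝ) (hξ : ContDiff ℝ (⊤ : ℕ∞) ξ) (hμ : ContDiff ℝ (⊤ : ℕ∞) μ)
    (hosc : ∀ s, σ s = ξ s • deriv σ s + (μ s / κ s) • deriv (deriv σ) s)
    (δ : ℝ × ℝ → ℝ) (hδ : ContDiff ℝ (⊤ : ℕ∞) δ) (hδpos : ∀ p, 0 < δ p)
    (A : ℝ × ℝ → ((Fin 3 → ℝ) →L[ℝ] (Fin 3 → ℝ))) (hA : ContDiff ℝ (⊤ : ℕ∞) A)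
    (Φt : ℝ × ℝ → Fin 3 → ℝ) (hΦt : ContDiff ℝ (⊤ : ℕ∞) Φt)
    (hΦtu : ∀ p, pu Φt p = δ p • A p (pu Φ p))
    (hΦtv : ∀ p, pv Φt p = δ p • A p (pv Φ p))
    (σt : ℝ → Fin 3 → ℝ)
    (hσt : ∀ s, σt s =
      δ (u s, v s) • A (u s, v s) (σ s) +
      (μ s / κ s) •
        ((deriv u s) ^ 2 •
            (pu δ (u s, v s) • A (u s, v s) (pu Φ (u s, v s)) +
             δ (u s, v s) • (pu A (u s, v s)) (pu Φ (u s, v s))) +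
         (2 * deriv u s * deriv v s) •
            (pu δ (u s, v s) • A (u s, v s) (pv Φ (u s, v s)) +
             δ (u s, v s) • (pu A (u s, v s)) (pv Φ (u s, v s))) +
         (deriv v s) ^ 2 •
            (pv δ (u s, v s) • A (u s, v s) (pv Φ (u s, v s)) +
             δ (u s, v s) • (pv A (u s, v s)) (pv Φ (u s, v s))))) :
    ∀ s, σt s = ξ s • (deriv u s • pu Φt (u s, v s) + deriv v s • pv Φt (u s, v s)) +
      (μ s / κ s) •
        (deriv (deriv u) s • pu Φt (u s, v s) + deriv (deriv v) s • pv Φt (u s, v s) +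
         (deriv u s) ^ 2 • pu (pu Φt) (u s, v s) +
         (2 * deriv u s * deriv v s) • pv (pu Φt) (u s, v s) +
         (deriv v s) ^ 2 • pv (pv Φt) (u s, v s)) ∧
      σt s ∈ Submodule.span ℝ
        ({deriv u s • pu Φt (u s, v s) + deriv v s • pv Φt (u s, v s),
          deriv (deriv u) s • pu Φt (u s, v s) + deriv (deriv v) s • pv Φt (u s, v s) +
            (deriv u s) ^ 2 • pu (pu Φt) (u s, v s) +
            (2 * deriv u s * deriv v s) • pv (pu Φt) (u s, v s) +
            (deriv v s) ^ 2 • pv (pv Φt) (u s, v s)} : Set (Fin 3 → ℝ)) := by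
  have hσfun : σ = fun t => Φ (u t, v t) := funext hσ
  have hds : ∀ t, HasDerivAt σ
      (deriv u t • pu Φ (u t, v t) + deriv v t • pv Φ (u t, v t)) t := by
    intro t; rw [hσfun]; exact hasDerivAt_comp_patch hΦ hu hv t
  have hderivσ : deriv σ
      = fun t => deriv u t • pu Φ (u t, v t) + deriv v t • pv Φ (u t, v t) :=
    funext fun t => (hds t).deriv
  have hu' : ContDiff ℝ (⊤ : ℕ∞) (deriv u) := by
    exact (contDiff_infty_iff_deriv.mp hu).2
  have hv' : ContDiff ℝ (⊤ : ℕ∞) (deriv v) := by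
    exact (contDiff_infty_iff_deriv.mp hv).2
  have hdds : ∀ s, HasDerivAt (deriv σ)
      ((deriv u s • (deriv u s • pu (pu Φ) (u s, v s) + deriv v s • pv (pu Φ) (u s, v s))
        + deriv (deriv u) s • pu Φ (u s, v s))
       + (deriv v s • (deriv u s • pu (pv Φ) (u s, v s) + deriv v s • pv (pv Φ) (u s, v s))
        + deriv (deriv v) s • pv Φ (u s, v s))) s := by
    intro s
    rw [hderivσ]
    exact (((hu'.differentiable (by simp) s).hasDerivAt).smul
        (hasDerivAt_comp_patch (contDiff_pu hΦ) hu hv s)).add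
      (((hv'.differentiable (by simp) s).hasDerivAt).smul
        (hasDerivAt_comp_patch (contDiff_pv hΦ) hu hv s))
  have hΦtufun : pu Φt = fun p => δ p • A p (pu Φ p) := funext hΦtu
  have hΦtvfun : pv Φt = fun p => δ p • A p (pv Φ p) := funext hΦtv
  have hpuput : ∀ q, pu (pu Φt) q = pu δ q • A q (pu Φ q)
      + δ q • (pu A q) (pu Φ q) + δ q • A q (pu (pu Φ) q) := by
    intro q
    show fderiv ℝ (pu Φt) q (1,0) = _
    rw [hΦtufun, pd_smul_clm hδ hA (contDiff_pu hΦ) q (1,0)]; rfl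
  have hpvput : ∀ q, pv (pu Φt) q = pu δ q • A q (pv Φ q)
      + δ q • (pu A q) (pv Φ q) + δ q • A q (pu (pv Φ) q) := by
    intro q
    rw [pvpu_eq_pupv hΦt q]
    show fderiv ℝ (pv Φt) q (1,0) = _
    rw [hΦtvfun, pd_smul_clm hδ hA (contDiff_pv hΦ) q (1,0)]; rfl
  have hpvpvt : ∀ q, pv (pv Φt) q = pv δ q • A q (pv Φ q)
      + δ q • (pv A q) (pv Φ q) + δ q • A q (pv (pv Φ) q) := by
    intro q
    show fderiv ℝ (pv Φt) q (0,1) = _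
    rw [hΦtvfun, pd_smul_clm hδ hA (contDiff_pv hΦ) q (0,1)]; rfl
  intro s
  have key : σt s = ξ s • (deriv u s • pu Φt (u s, v s) + deriv v s • pv Φt (u s, v s)) +
      (μ s / κ s) •
        (deriv (deriv u) s • pu Φt (u s, v s) + deriv (deriv v) s • pv Φt (u s, v s) +
         (deriv u s) ^ 2 • pu (pu Φt) (u s, v s) +
         (2 * deriv u s * deriv v s) • pv (pu Φt) (u s, v s) +
         (deriv v s) ^ 2 • pv (pv Φt) (u s, v s)) := by
    rw [hσt s, hosc s]
    rw [(hds s).deriv, (hdds s).deriv]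
    rw [hΦtu, hΦtv, hpuput, hpvput, hpvpvt]
    rw [pvpu_eq_pupv hΦ (u s, v s)]
    simp only [map_add, _root_.map_smul, smul_add]
    module
  refine ⟨key, ?_⟩
  rw [key]
  exact Submodule.add_mem _
    (Submodule.smul_mem _ _ (Submodule.subset_span (by simp)))
    (Submodule.smul_mem _ _ (Submodule.subset_span (by simp)))
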